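/- arXiv:2006.01296 — 3 statements merged into one kernel-verified Lean document; each statement's English description precedes it below -/
import Mathlib

section
/- Every element of A₅ can be written as a product of at most 6 factors, each of which is (1 2 3), (3 4 5), or one of their inverses. -/
open Equiv

def gensL : List (Perm (Fin 5)) :=
  [c[(0 : Fin 5), 1, 2], c[(0 : Fin 5), 1, 2]⁻¹, c[(2 : Fin 5), 3, 4], c[(2 : Fin 5), 3, 4]⁻¹]

def step6 (s : Finset (Perm (Fin 5))) : Finset (Perm (Fin 5)) :=
  s ∪ gensL.toFinset.biUnion fun a => s.image (· * a)

def T6 : ℕ → Finset (Perm (Fin 5))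
  | 0 => {1}
  | n + 1 => step6 (T6 n)

set_option maxRecDepth 100000 in
set_option maxHeartbeats 4000000 in
theorem alt_mem_T6 : ∀ g : Perm (Fin 5), g.sign = 1 → g ∈ T6 6 := by decide

theorem T6_words : ∀ n, ∀ g ∈ T6 n,
    ∃ l : List (Perm (Fin 5)), l.length ≤ n ∧ (∀ x ∈ l, x ∈ gensL) ∧ l.prod = g := by
  intro n
  induction n with
  | zero =>
    intro g hg
    simp only [T6, Finset.mem_singleton] at hg
    exact ⟨[], by simp [hg.symm]⟩
  | succ n ih =>
    intro g hg
    simp only [T6, step6, Finset.mem_union, Finset.mem_biUnion, Finset.mem_image,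
      List.mem_toFinset] at hg
    rcases hg with hg | ⟨a, ha, h, hh, rfl⟩
    · obtain ⟨l, h1, h2, h3⟩ := ih g hg
      exact ⟨l, h1.trans (Nat.le_succ n), h2, h3⟩
    · obtain ⟨l, h1, h2, h3⟩ := ih h hh
      refine ⟨l ++ [a], ?_, ?_, ?_⟩
      · simpa using Nat.succ_le_succ h1
      · intro x hx
        rcases List.mem_append.mp hx with hx | hx
        · exact h2 x hx
        · simp only [List.mem_singleton] at hx; exact hx ▸ ha
      · simp [h3]

/-- Every element of A₅ is a product of at most 6 factors, each of which is
(1 2 3), (3 4 5) or one of their inverses (0-based labels). -/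
theorem stmt_6 :
    ∀ g ∈ alternatingGroup (Fin 5),
      ∃ l : List (Equiv.Perm (Fin 5)),
        l.length ≤ 6 ∧
        (∀ x ∈ l, x ∈ ({c[(0 : Fin 5), 1, 2], c[(0 : Fin 5), 1, 2]⁻¹,
          c[(2 : Fin 5), 3, 4], c[(2 : Fin 5), 3, 4]⁻¹} :
            Set (Equiv.Perm (Fin 5)))) ∧
        l.prod = g := by
  intro g hg
  have hs : g.sign = 1 := Equiv.Perm.mem_alternatingGroup.mp hg
  obtain ⟨l, h1, h2, h3⟩ := T6_words 6 g (alt_mem_T6 g hs)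
  refine ⟨l, h1, ?_, h3⟩
  intro x hx
  have := h2 x hx
  simp only [gensL, List.mem_cons, List.not_mem_nil, or_false] at this
  simp only [Set.mem_insert_iff, Set.mem_singleton_iff]
  tauto
end

section
/- The permutation (1 2)(4 5) cannot be written as a product of fewer than 6 factors from the set {(1 2 3), (1 2 3)⁻¹, (3 4 5), (3 4 5)⁻¹}, and it has word length exactly 6 with respect to this set. -/
/-! Every word of length at most `n` over a finite set `s` multiplies out to an element of the
finite set `(insert 1 s) ^ n`, the ball of radius `n` in the Cayley graph, which the kernel can
enumerate. For `a = (1 2 3)`, `b = (3 4 5)` the ball of radius 5 misses `(1 2)(4 5)`, while the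
word `a b a⁻¹ b⁻¹ a b` of length 6 evaluates to it. -/

open scoped Pointwise

namespace List

variable {M : Type*} [Monoid M] [DecidableEq M] {s : Finset M} {l : List M}

theorem prod_mem_finset_pow (hl : ∀ x ∈ l, x ∈ s) : l.prod ∈ s ^ l.length := by
  induction l with
  | nil => simp
  | cons x l ih =>
    rw [prod_cons, length_cons, pow_succ']
    exact Finset.mul_mem_mul (hl x mem_cons_self) (ih fun y hy => hl y (mem_cons_of_mem x hy))

theorem prod_mem_insert_one_pow {n : ℕ} (hl : ∀ x ∈ l, x ∈ s) (hn : l.length ≤ n) :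
    l.prod ∈ insert 1 s ^ n :=
  Finset.pow_subset_pow_right (Finset.mem_insert_self 1 s) hn <|
    prod_mem_finset_pow fun x hx => Finset.mem_insert_of_mem (hl x hx)

end List

open Equiv

-- Irreducible: otherwise unifying against membership in this finset makes the elaborator
-- evaluate it. `decide +kernel` is unaffected.
@[irreducible] def a5Generators : Finset (Perm (Fin 5)) :=
  {c[0, 1, 2], c[0, 1, 2]⁻¹, c[2, 3, 4], c[2, 3, 4]⁻¹}

theorem swap01_mul_swap34_notMem_ball_five :
    c[(0 : Fin 5), 1] * c[(3 : Fin 5), 4] ∉ insert 1 a5Generators ^ 5 := by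
  decide +kernel

/-- (1 2)(4 5) is not a product of fewer than 6 factors from
{(1 2 3)^{±1}, (3 4 5)^{±1}}, but is a product of exactly 6 such factors
(0-based labels). -/
theorem stmt_7 :
    (¬ ∃ l : List (Equiv.Perm (Fin 5)),
        l.length < 6 ∧
        (∀ x ∈ l, x ∈ ({c[(0 : Fin 5), 1, 2], c[(0 : Fin 5), 1, 2]⁻¹,
          c[(2 : Fin 5), 3, 4], c[(2 : Fin 5), 3, 4]⁻¹} :
            Set (Equiv.Perm (Fin 5)))) ∧
        l.prod = c[(0 : Fin 5), 1] * c[(3 : Fin 5), 4]) ∧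
    (∃ l : List (Equiv.Perm (Fin 5)),
        l.length = 6 ∧
        (∀ x ∈ l, x ∈ ({c[(0 : Fin 5), 1, 2], c[(0 : Fin 5), 1, 2]⁻¹,
          c[(2 : Fin 5), 3, 4], c[(2 : Fin 5), 3, 4]⁻¹} :
            Set (Equiv.Perm (Fin 5)))) ∧
        l.prod = c[(0 : Fin 5), 1] * c[(3 : Fin 5), 4]) := by
  constructor
  · rintro ⟨l, hlen, hmem, hprod⟩
    have hgen : ∀ x ∈ l, x ∈ a5Generators := fun x hx => by
      simpa [a5Generators] using hmem x hx
    exact swap01_mul_swap34_notMem_ball_five <|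
      hprod ▸ l.prod_mem_insert_one_pow hgen (Nat.le_of_lt_succ hlen)
  · refine ⟨[c[0, 1, 2], c[2, 3, 4], c[0, 1, 2]⁻¹, c[2, 3, 4]⁻¹, c[0, 1, 2], c[2, 3, 4]],
      rfl, by simp, by decide +kernel⟩
end

section
/- A semidirect product A₇ ⋊ ℤ₂ is isomorphic either to the direct product A₇ × ℤ₂ or to the symmetric group S₇. -/
/-!
An index-7 subgroup `K` of `A₇` fixes a point: the orbit `O` of `0` under `K` is `K`-stable, and
the setwise stabiliser of `O` in `A₇` has index `C(7, |O|)` (by `|O|`-transitivity), which divides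
`7` only for `|O| ∈ {1, 6, 7}`; `|O| = 7` is excluded since `7 ∤ |K| = 360`, and for `|O| = 6` the
complement of `O` is a fixed point. Hence an automorphism `f` of `A₇` permutes the point
stabilisers, and the induced permutation `π` of the points satisfies `f g = π g π⁻¹`. As `A₇` has
trivial centraliser in `S₇`, `π` is unique, so `f ↦ π` is a homomorphism `ρ : Aut A₇ → S₇`.
If `ρ ∘ φ` takes values in `A₇` then `φ` is inner and the semidirect product is direct;
otherwise `(a, z) ↦ a · ρ (φ z)` is an isomorphism onto `S₇`.
-/

open Equiv Equiv.Perm MulAction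
open scoped Pointwise

namespace SemidirectProduct

variable {N G H : Type*} [Group N] [Group G] [Group H] {φ : G →* MulAut N}

def mulEquivProdOfEqConj (ψ : G →* N) (hφ : ∀ g, φ g = MulAut.conj (ψ g)) :
    N ⋊[φ] G ≃* N × G where
  toFun x := (x.left * ψ x.right, x.right)
  invFun y := ⟨y.1 * (ψ y.2)⁻¹, y.2⟩
  left_inv x := by simp
  right_inv y := by simp
  map_mul' x y := by simp [hφ, mul_assoc]

theorem lift_bijective [Finite H] (fn : N →* H) (fg : G →* H)
    (h : ∀ g, fn.comp (φ g).toMonoidHom = (MulAut.conj (fg g)).toMonoidHom.comp fn)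
    (hfn : Function.Injective fn) (hdisj : ∀ n g, fn n = fg g → g = 1)
    (hcard : Nat.card H ≤ Nat.card N * Nat.card G) :
    Function.Bijective (lift fn fg h) := by
  refine Function.Injective.bijective_of_nat_card_le ?_ (by rwa [card])
  refine (injective_iff_map_eq_one _).mpr fun x hx => ?_
  have hx' : fn x.left = fg x.right⁻¹ := by
    rw [map_inv, ← mul_eq_one_iff_eq_inv]; exact hx
  have hright : x.right = 1 := inv_eq_one.mp (hdisj _ _ hx')
  have hleft : x.left = 1 := hfn (by rw [hx', hright, inv_one, map_one, map_one])
  exact SemidirectProduct.ext hleft hright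

end SemidirectProduct

namespace alternatingGroup

variable {α : Type*} [Fintype α] [DecidableEq α]

theorem stabilizer_injective (hα : 4 ≤ Fintype.card α) :
    Function.Injective (stabilizer (alternatingGroup α) : α → _) := by
  intro i j hij
  by_contra hne
  have hcard : 1 < ({i, j}ᶜ : Finset α).card := by
    rw [Finset.card_compl, Finset.card_pair hne]; omega
  obtain ⟨k, hk, l, hl, hkl⟩ := Finset.one_lt_card.mp hcard
  simp only [Finset.mem_compl, Finset.mem_insert, Finset.mem_singleton, not_or] at hk hl
  let g : alternatingGroup α := ⟨swap j k * swap j l, by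
    simp [mem_alternatingGroup, Ne.symm hk.2, Ne.symm hl.2]⟩
  have hgi : g ∈ stabilizer (alternatingGroup α) i := by
    simp [g, Perm.smul_def, swap_apply_of_ne_of_ne, hne, Ne.symm hk.1, Ne.symm hl.1]
  rw [hij] at hgi
  have : swap j k (swap j l j) = j := hgi
  rw [swap_apply_left, swap_apply_of_ne_of_ne hl.2 hkl.symm] at this
  exact hl.2 this

theorem centralizer_eq_bot (hα : 4 ≤ Fintype.card α) :
    Subgroup.centralizer (alternatingGroup α : Set (Perm α)) = ⊥ := by
  refine (Subgroup.eq_bot_iff_forall _).mpr fun c hc => Perm.ext fun i => ?_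
  refine stabilizer_injective hα (Subgroup.ext fun g => ?_)
  have hcomm : g * c = c * g := Subgroup.mem_centralizer_iff.mp hc g g.2
  simp only [mem_stabilizer_iff, Subgroup.smul_def, Perm.smul_def, Perm.one_apply]
  rw [← Perm.mul_apply, hcomm, Perm.mul_apply, c.injective.eq_iff]

theorem perm_eq_of_forall_conj_eq (hα : 4 ≤ Fintype.card α) {p q : Perm α}
    (h : ∀ x : alternatingGroup α, p * x * p⁻¹ = q * x * q⁻¹) : p = q := by
  suffices q⁻¹ * p ∈ Subgroup.centralizer (alternatingGroup α : Set (Perm α)) by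
    rwa [centralizer_eq_bot hα, Subgroup.mem_bot, inv_mul_eq_one, eq_comm] at this
  refine Subgroup.mem_centralizer_iff.mpr fun x hx => ?_
  calc x * (q⁻¹ * p) = q⁻¹ * (q * x * q⁻¹) * p := by group
    _ = q⁻¹ * (p * x * p⁻¹) * p := by rw [← h ⟨x, hx⟩]
    _ = q⁻¹ * p * x := by group

theorem index_stabilizer_set (hα : 3 ≤ Fintype.card α) (s : Set α) :
    (stabilizer (alternatingGroup α) s).index = (Fintype.card α).choose s.ncard := by
  have := Set.powersetCard.isPretransitive_alternatingGroup (α := α) (n := s.ncard)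
    (by rwa [Nat.card_eq_fintype_card])
  let S : Set.powersetCard α s.ncard :=
    ⟨s.toFinite.toFinset, by rw [Set.powersetCard.mem_iff, Set.ncard_eq_toFinset_card]⟩
  have hS : (S : Set α) = s := by ext; simp [S]
  calc (stabilizer (alternatingGroup α) s).index = (stabilizer (alternatingGroup α) S).index := by
        conv_lhs => rw [← hS]
        exact congrArg Subgroup.index (Set.powersetCard.stabilizer_coe S).symm
    _ = Nat.card (Set.powersetCard α s.ncard) := index_stabilizer_of_transitive _ S
    _ = (Fintype.card α).choose s.ncard := by
        rw [Set.powersetCard.card, Nat.card_eq_fintype_card]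

theorem exists_perm_conj_of_forall_map_stabilizer (hα : 4 ≤ Fintype.card α)
    (f : MulAut (alternatingGroup α))
    (hf : ∀ i : α, ∃ j : α, (stabilizer (alternatingGroup α) i).map (f : _ →* _) =
      stabilizer (alternatingGroup α) j) :
    ∃ p : Perm α, ∀ x : alternatingGroup α, (f x : Perm α) = p * x * p⁻¹ := by
  choose π hπ using hf
  have hπ_inj : Function.Injective π := fun i i' h => stabilizer_injective hα <|
    Subgroup.map_injective f.injective ((hπ i).trans (h ▸ (hπ i').symm))
  have hπ_bij : Function.Bijective π := Finite.injective_iff_bijective.mp hπ_inj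
  have hπ_smul : ∀ (g : alternatingGroup α) i, π (g • i) = f g • π i := by
    intro g i
    apply stabilizer_injective hα
    rw [← hπ (g • i), stabilizer_smul_eq_stabilizer_map_conj g i,
      stabilizer_smul_eq_stabilizer_map_conj (f g) (π i), ← hπ i, Subgroup.map_map,
      Subgroup.map_map]
    congr 1
    ext x
    simp
  refine ⟨Equiv.ofBijective π hπ_bij, fun x => Perm.ext fun j => ?_⟩
  obtain ⟨i, rfl⟩ := hπ_bij.2 j
  have := hπ_smul x i
  simp only [Subgroup.smul_def, Perm.smul_def] at this
  simp [Perm.mul_apply, this]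

instance : IsPretransitive (alternatingGroup (Fin 7)) (Fin 7) :=
  isPretransitive_of_three_le_card _ (by simp)

theorem nat_card_fin_seven : Nat.card (alternatingGroup (Fin 7)) = 2520 := by
  rw [nat_card_alternatingGroup, Nat.card_fin]; rfl

theorem exists_eq_stabilizer_of_index_eq_seven {K : Subgroup (alternatingGroup (Fin 7))}
    (hK : K.index = 7) : ∃ i : Fin 7, K = stabilizer (alternatingGroup (Fin 7)) i := by
  have hcardK : Nat.card K = 360 := by
    have := K.card_mul_index
    rw [hK, nat_card_fin_seven] at this
    omega
  suffices ∃ i : Fin 7, K ≤ stabilizer (alternatingGroup (Fin 7)) i by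
    obtain ⟨i, hi⟩ := this
    refine ⟨i, Subgroup.eq_of_le_of_card_ge hi ?_⟩
    have := (stabilizer (alternatingGroup (Fin 7)) i).card_mul_index
    rw [index_stabilizer_of_transitive, Nat.card_fin, nat_card_fin_seven] at this
    omega
  set O := orbit K (0 : Fin 7)
  have hKO : K ≤ stabilizer (alternatingGroup (Fin 7)) O := fun g hg =>
    smul_orbit (⟨g, hg⟩ : K) 0
  have hchoose : (7).choose O.ncard ∣ 7 := by
    have := Subgroup.index_dvd_of_le hKO
    rwa [hK, index_stabilizer_set (by simp), Fintype.card_fin] at this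
  have horbit : O.ncard ∣ 360 := by
    rw [← index_stabilizer, ← hcardK]
    exact Subgroup.index_dvd_card _
  have hpos : 0 < O.ncard := (Set.ncard_pos).mpr (nonempty_orbit _)
  have hle : O.ncard ≤ 7 := (Set.ncard_le_card O).trans_eq (Nat.card_fin 7)
  obtain ⟨t, ht, hKt⟩ : ∃ t : Set (Fin 7), t.ncard = 1 ∧
      K ≤ stabilizer (alternatingGroup (Fin 7)) t := by
    have : O.ncard = 1 ∨ O.ncard = 6 := by
      interval_cases O.ncard <;> simp_all [Nat.choose]
    rcases this with h | h
    · exact ⟨O, h, hKO⟩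
    · refine ⟨Oᶜ, ?_, by rwa [stabilizer_compl]⟩
      have := Set.ncard_add_ncard_compl O
      rw [h, Nat.card_fin] at this
      omega
  obtain ⟨i, rfl⟩ := Set.ncard_eq_one.mp ht
  exact ⟨i, by rwa [stabilizer_singleton] at hKt⟩

theorem exists_perm_conj_fin_seven (f : MulAut (alternatingGroup (Fin 7))) :
    ∃ p : Perm (Fin 7), ∀ x : alternatingGroup (Fin 7), (f x : Perm (Fin 7)) = p * x * p⁻¹ :=
  exists_perm_conj_of_forall_map_stabilizer (by simp) f fun i =>
    exists_eq_stabilizer_of_index_eq_seven (by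
      rw [Subgroup.index_map_equiv, index_stabilizer_of_transitive, Nat.card_fin])

noncomputable def mulAutToPermFinSeven : MulAut (alternatingGroup (Fin 7)) →* Perm (Fin 7) where
  toFun f := (exists_perm_conj_fin_seven f).choose
  map_one' := perm_eq_of_forall_conj_eq (by simp) fun x => by
    rw [← (exists_perm_conj_fin_seven 1).choose_spec x]
    simp
  map_mul' f g := perm_eq_of_forall_conj_eq (by simp) fun x => by
    rw [← (exists_perm_conj_fin_seven (f * g)).choose_spec x, MulAut.mul_apply,
      (exists_perm_conj_fin_seven f).choose_spec, (exists_perm_conj_fin_seven g).choose_spec]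
    group

theorem coe_apply_eq_mulAutToPermFinSeven_conj (f : MulAut (alternatingGroup (Fin 7)))
    (x : alternatingGroup (Fin 7)) :
    (f x : Perm (Fin 7)) = mulAutToPermFinSeven f * x * (mulAutToPermFinSeven f)⁻¹ :=
  (exists_perm_conj_fin_seven f).choose_spec x

end alternatingGroup

open SemidirectProduct in
/-- Any semidirect product A₇ ⋊ ℤ₂ is isomorphic to A₇ × ℤ₂ or to S₇. -/
theorem stmt_11
    (φ : Multiplicative (ZMod 2) →* MulAut (alternatingGroup (Fin 7))) :
    Nonempty ((alternatingGroup (Fin 7)) ⋊[φ] Multiplicative (ZMod 2) ≃*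
        (alternatingGroup (Fin 7)) × Multiplicative (ZMod 2)) ∨
    Nonempty ((alternatingGroup (Fin 7)) ⋊[φ] Multiplicative (ZMod 2) ≃*
        Equiv.Perm (Fin 7)) := by
  set ρ := alternatingGroup.mulAutToPermFinSeven.comp φ
  by_cases heven : ∀ g, ρ g ∈ alternatingGroup (Fin 7)
  · refine .inl ⟨mulEquivProdOfEqConj (ρ.codRestrict _ heven) fun g =>
      MulEquiv.ext fun x => Subtype.ext ?_⟩
    exact alternatingGroup.coe_apply_eq_mulAutToPermFinSeven_conj (φ g) x
  · push Not at heven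
    obtain ⟨g₀, hg₀⟩ := heven
    have hcompat : ∀ g, (alternatingGroup (Fin 7)).subtype.comp (φ g).toMonoidHom =
        (MulAut.conj (ρ g)).toMonoidHom.comp (alternatingGroup (Fin 7)).subtype := fun g =>
      MonoidHom.ext (alternatingGroup.coe_apply_eq_mulAutToPermFinSeven_conj (φ g))
    have hdisj : ∀ (n : alternatingGroup (Fin 7)) g, (n : Perm (Fin 7)) = ρ g → g = 1 := by
      intro n g hn
      have hg₀1 : g₀ ≠ 1 := by rintro rfl; exact hg₀ (by simp)
      have two : ∀ a b : Multiplicative (ZMod 2), a ≠ 1 → b ≠ 1 → a = b := by decide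
      by_contra hg
      exact hg₀ (two g g₀ hg hg₀1 ▸ hn ▸ n.2)
    have hcard : Nat.card (Perm (Fin 7)) ≤
        Nat.card (alternatingGroup (Fin 7)) * Nat.card (Multiplicative (ZMod 2)) := by
      rw [← two_mul_nat_card_alternatingGroup, Nat.card_eq_fintype_card (α := Multiplicative _),
        Fintype.card_multiplicative, ZMod.card, mul_comm]
    exact .inr ⟨MulEquiv.ofBijective _
      (lift_bijective _ _ hcompat Subtype.val_injective hdisj hcard)⟩
end
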